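/- For every ν in the dual lattice N with ⟨ν, e_i⟩ > 0 for all 1 ≤ i ≤ d and every integer s ≥ 1, there exists exactly one integer k with 0 ≤ k ≤ d such that φ_k(ν) ≤ s < φ_{k+1}(ν). -/

import Mathlib

/-!
An index set admissible for `J_k` is an independent `k`-subset of `{e_1, …, e_d, λ_1, …, λ_g}`
containing at most one `λ_j`. These sets have an exchange property: given admissible `I` and `I''`
of sizes `k` and `k + 2`, at least two elements of `I''` lie outside the span of `I`, one of them
is some `e_i`, and moving it from `I''` to `I` leaves two admissible sets of size `k + 1`.
Comparing the minima defining `ord_{J_•}(ν)` gives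
`2 ord_{J_{k+1}}(ν) ≤ ord_{J_k}(ν) + ord_{J_{k+2}}(ν)`, i.e. `φ_1 ≤ φ_2 ≤ ⋯ ≤ φ_d`.
Since `φ_0 = 0 ≤ s`, the required `k` is the largest `k ≤ d` with `φ_k(ν) ≤ s`, and monotonicity
makes it unique.
-/

open scoped BigOperators Classical

namespace QO

/-- The standard pairing `⟨ν, m⟩ = ∑ i, ν i * m i` on `ℚ^d`. -/
def pair (d : ℕ) (ν m : Fin d → ℚ) : ℚ := ∑ i, ν i * m i

/-- `E d lam i` is the `i`-th standard basis vector of `ℚ^d` for `1 ≤ i ≤ d`,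
and equals the characteristic exponent `λ_{i-d}` for `d + 1 ≤ i` (1-based indexing). -/
def E (d : ℕ) (lam : ℕ → Fin d → ℚ) (i : ℕ) : Fin d → ℚ :=
  if 1 ≤ i ∧ i ≤ d then (fun j => if (j : ℕ) = i - 1 then 1 else 0) else lam (i - d)

/-- The lattice `M_j = ℤ^d + ℤλ_1 + ⋯ + ℤλ_j`, as an additive subgroup of `ℚ^d`. -/
def Mlat (d : ℕ) (lam : ℕ → Fin d → ℚ) : ℕ → AddSubgroup (Fin d → ℚ)
  | 0 => AddSubgroup.closure (Set.range fun i : Fin d => (fun j => if j = i then (1 : ℚ) else 0))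
  | (j + 1) => Mlat d lam j ⊔ AddSubgroup.closure {lam (j + 1)}

/-- The dual lattice `N` of `M = M_g`. -/
def Ndual (d g : ℕ) (lam : ℕ → Fin d → ℚ) : Set (Fin d → ℚ) :=
  { ν | ∀ m ∈ Mlat d lam g, ∃ z : ℤ, pair d ν m = (z : ℚ) }

/-- Admissible index sets for `J_k`: `k` indices in `{1, …, d+g}`, at most one of which
exceeds `d`, whose associated vectors are linearly independent over `ℚ`. -/
def IdxOk (d g : ℕ) (lam : ℕ → Fin d → ℚ) (k : ℕ) (I : Finset ℕ) : Prop :=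
  I.card = k ∧ I ⊆ Finset.Icc 1 (d + g) ∧ (I.filter fun i => d + 1 ≤ i).card ≤ 1 ∧
    LinearIndependent ℚ (fun i : {x // x ∈ I} => E d lam i.1)

/-- The set `J_k` of sums `e_{j_1} + ⋯ + e_{j_k}`. -/
def Jset (d g : ℕ) (lam : ℕ → Fin d → ℚ) (k : ℕ) : Set (Fin d → ℚ) :=
  { w | ∃ I : Finset ℕ, IdxOk d g lam k I ∧ w = ∑ i ∈ I, E d lam i }

/-- The set `J_k`, as a finite set. -/
noncomputable def Jfin (d g : ℕ) (lam : ℕ → Fin d → ℚ) (k : ℕ) : Finset (Fin d → ℚ) :=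
  ((Finset.Icc 1 (d + g)).powerset.filter fun I => IdxOk d g lam k I).image
    fun I => ∑ i ∈ I, E d lam i

/-- The support function `ord_{J_k}(ν) = min_{w ∈ J_k} ⟨ν, w⟩`. -/
noncomputable def ordJ (d g : ℕ) (lam : ℕ → Fin d → ℚ) (k : ℕ) (ν : Fin d → ℚ) : ℚ :=
  if h : (Jfin d g lam k).Nonempty then ((Jfin d g lam k).image (pair d ν)).min' (h.image _)
  else 0

/-- `φ_k(ν) = ord_{J_k}(ν) - ord_{J_{k-1}}(ν)` (note `ord_{J_0} = 0`, hence also `φ_0 = 0`). -/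
noncomputable def phiJ (d g : ℕ) (lam : ℕ → Fin d → ℚ) (k : ℕ) (ν : Fin d → ℚ) : ℚ :=
  ordJ d g lam k ν - ordJ d g lam (k - 1) ν

/-- The sort key of the total order `≤_ν` on the indices `1, …, d+g`: sort by the value
`⟨ν, ·⟩`, breaking ties (in particular ties between an `e_i` with `i ≤ d` and a `λ_j`)
by the index, so that `e_i` is placed first. -/
noncomputable def keyIdx (d : ℕ) (lam : ℕ → Fin d → ℚ) (ν : Fin d → ℚ) (i : ℕ) : ℚ ×ₗ ℕ :=
  toLex (pair d ν (E d lam i), i)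

/-- The `≤_ν`-least element of a finite set of indices. -/
noncomputable def leastIdx (d : ℕ) (lam : ℕ → Fin d → ℚ) (ν : Fin d → ℚ) (S : Finset ℕ) : ℕ :=
  if h : S.Nonempty then (ofLex ((S.image (keyIdx d lam ν)).min' (h.image _))).2 else 0

/-- The `≤_ν`-greatest element of a finite set of indices. -/
noncomputable def greatestIdx (d : ℕ) (lam : ℕ → Fin d → ℚ) (ν : Fin d → ℚ)
    (S : Finset ℕ) : ℕ :=
  if h : S.Nonempty then (ofLex ((S.image (keyIdx d lam ν)).max' (h.image _))).2 else 0

/-- The `ℚ`-span of the vectors indexed by `I`. -/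
def spanOf (d : ℕ) (lam : ℕ → Fin d → ℚ) (I : Finset ℕ) : Submodule ℚ (Fin d → ℚ) :=
  Submodule.span ℚ ((fun i => E d lam i) '' (I : Set ℕ))

/-- `n(k)`: the index `n` such that `λ_n` is a summand of `w_k`, and `0` if there is none. -/
noncomputable def nVal (d : ℕ) (I : Finset ℕ) : ℕ :=
  if h : (I.filter fun i => d + 1 ≤ i).Nonempty then (I.filter fun i => d + 1 ≤ i).min' h - d
  else 0

/-- `t(k)`: the least `1 ≤ j ≤ g` with `λ_j ∉ ℓ_k(ν)`, and `g + 1` if there is none. -/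
noncomputable def tVal (d g : ℕ) (lam : ℕ → Fin d → ℚ) (I : Finset ℕ) : ℕ :=
  if h : ((Finset.Icc 1 g).filter fun j => lam j ∉ spanOf d lam I).Nonempty then
    ((Finset.Icc 1 g).filter fun j => lam j ∉ spanOf d lam I).min' h
  else g + 1

/-- `m(k)`: the index `m` with `({e_1, …, e_d} ∩ ℓ_k(ν)) ∖ {summands of w_k} = {e_m}`,
and `0` if this set is empty. -/
noncomputable def mVal (d : ℕ) (lam : ℕ → Fin d → ℚ) (I : Finset ℕ) : ℕ :=
  if h : (((Finset.Icc 1 d).filter fun i => E d lam i ∈ spanOf d lam I) \ I).Nonempty then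
    (((Finset.Icc 1 d).filter fun i => E d lam i ∈ spanOf d lam I) \ I).min' h
  else 0

/-- `i(k)`: the `≤_ν`-least index `1 ≤ i ≤ d + g` with `w_k + e_i ∈ J_{k+1}`. -/
noncomputable def iVal (d g : ℕ) (lam : ℕ → Fin d → ℚ) (ν : Fin d → ℚ) (k : ℕ)
    (I : Finset ℕ) : ℕ :=
  leastIdx d lam ν ((Finset.Icc 1 (d + g)).filter fun i => IdxOk d g lam (k + 1) (insert i I))

/-- One step of the algorithm, from the summands of `w_k` to the summands of `w_{k+1}`:
`a_{k+1} = w_k + e_{i(k)}` and `b_{k+1} = w_k - λ_{n(k)} + λ_{t(k)} + e_{m(k)}`; the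
candidate `b_{k+1}` is discarded when `m(k) = 0` or `t(k) = g + 1`, and otherwise
`w_{k+1} = a_{k+1}` exactly when `⟨ν, a_{k+1}⟩ ≤ ⟨ν, b_{k+1}⟩`. -/
noncomputable def step (d g : ℕ) (lam : ℕ → Fin d → ℚ) (ν : Fin d → ℚ) (k : ℕ)
    (I : Finset ℕ) : Finset ℕ :=
  let a : Finset ℕ := insert (iVal d g lam ν k I) I
  let b : Finset ℕ :=
    insert (mVal d lam I) (insert (d + tVal d g lam I)
      (if nVal d I = 0 then I else I.erase (d + nVal d I)))
  if mVal d lam I = 0 ∨ tVal d g lam I = g + 1 then a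
  else if pair d ν (∑ i ∈ a, E d lam i) ≤ pair d ν (∑ i ∈ b, E d lam i) then a else b

/-- The index sets `W ν k` of summands of the algorithm's vectors `w_k`; the vector `w_1`
is the `≤_ν`-least element of `{e_1, …, e_d, λ_1}`. -/
noncomputable def W (d g : ℕ) (lam : ℕ → Fin d → ℚ) (ν : Fin d → ℚ) : ℕ → Finset ℕ
  | 0 => ∅
  | 1 => {leastIdx d lam ν (insert (d + 1) (Finset.Icc 1 d))}
  | (k + 2) => step d g lam ν (k + 1) (W d g lam ν (k + 1))

/-- The algorithm's vector `w_k`. -/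
noncomputable def wVec (d g : ℕ) (lam : ℕ → Fin d → ℚ) (ν : Fin d → ℚ) (k : ℕ) :
    Fin d → ℚ :=
  ∑ i ∈ W d g lam ν k, E d lam i

/-- `ℓ_k(ν)`: the `ℚ`-span of the summands of `w_k`. -/
noncomputable def ellK (d g : ℕ) (lam : ℕ → Fin d → ℚ) (ν : Fin d → ℚ) (k : ℕ) :
    Submodule ℚ (Fin d → ℚ) :=
  spanOf d lam (W d g lam ν k)

/-- `ℓ_ν^s = span_ℚ{e_j : 1 ≤ j < d + t(k), ⟨ν, e_j⟩ ≤ s}`, where `k` is the index with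
`φ_k(ν) ≤ s < φ_{k+1}(ν)`. -/
noncomputable def ellS (d g : ℕ) (lam : ℕ → Fin d → ℚ) (ν : Fin d → ℚ) (s : ℚ) (k : ℕ) :
    Submodule ℚ (Fin d → ℚ) :=
  Submodule.span ℚ ((fun i => E d lam i) ''
    { i : ℕ | 1 ≤ i ∧ i < d + tVal d g lam (W d g lam ν k) ∧ pair d ν (E d lam i) ≤ s })

/-- `p(k)` (with the convention `λ_0 = 0`). -/
noncomputable def pVal (d g : ℕ) (lam : ℕ → Fin d → ℚ) (ν : Fin d → ℚ) (s : ℚ)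
    (k : ℕ) : ℕ :=
  if nVal d (W d g lam ν k) = 0 then
    if h : ((Finset.Icc 0 g).filter fun j =>
        pair d ν (if j = 0 then (0 : Fin d → ℚ) else lam j) ≤ s).Nonempty then
      ((Finset.Icc 0 g).filter fun j =>
        pair d ν (if j = 0 then (0 : Fin d → ℚ) else lam j) ≤ s).max' h
    else 0
  else
    (insert (nVal d (W d g lam ν k))
      ((Finset.Ioo (nVal d (W d g lam ν k)) (tVal d g lam (W d g lam ν k))).filter fun j =>
        mVal d lam (W d g lam ν k) ≠ 0 ∧
          pair d ν (E d lam (mVal d lam (W d g lam ν k)) - lam (nVal d (W d g lam ν k)) + lam j)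
            ≤ s)).max' (Finset.insert_nonempty _ _)

/-- `q_η`: the index of the `≤_ν`-greatest element of `{e_1, …, e_d} ∩ ℓ(η)`, where
`ℓ(η) = span_ℚ{e_i : η_i ≠ 0}`. -/
noncomputable def qIdx (d : ℕ) (lam : ℕ → Fin d → ℚ) (ν η : Fin d → ℚ) : ℕ :=
  greatestIdx d lam ν ((Finset.Icc 1 d).filter fun i => pair d η (E d lam i) ≠ 0)

end QO

theorem LinearIndepOn.card_filter_mem_span_le {K V ι : Type*} [DivisionRing K] [AddCommGroup V]
    [Module K V] {v : ι → V} {s t : Finset ι} (hs : LinearIndepOn K v (s : Set ι)) :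
    (s.filter fun i => v i ∈ Submodule.span K (v '' t)).card ≤ t.card := by
  set u := s.filter fun i => v i ∈ Submodule.span K (v '' t)
  have : FiniteDimensional K (Submodule.span K (v '' t)) :=
    FiniteDimensional.span_of_finite K (t.finite_toSet.image v)
  have hu : LinearIndepOn K v (u : Set ι) := hs.mono (Finset.coe_subset.2 (Finset.filter_subset _ _))
  have hli : LinearIndependent K
      (fun i : u => (⟨v i, (Finset.mem_filter.1 i.2).2⟩ : Submodule.span K (v '' t))) :=
    LinearIndependent.of_comp (Submodule.subtype _) hu
  calc u.card = Fintype.card u := (Fintype.card_coe u).symm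
    _ ≤ Module.finrank K (Submodule.span K (v '' t)) := hli.fintype_card_le_finrank
    _ ≤ (t.image v).card := by rw [← Finset.coe_image]; exact finrank_span_finset_le_card _
    _ ≤ t.card := Finset.card_image_le

theorem existsUnique_le_and_lt_succ {α : Type*} [LinearOrder α] {f : ℕ → α} {n : ℕ} {s : α}
    (hf : MonotoneOn f (Set.Icc 1 n)) (h0 : f 0 ≤ s) :
    ∃! k, k ≤ n ∧ f k ≤ s ∧ (k < n → s < f (k + 1)) := by
  have no_later : ∀ k k', k < k' → k' ≤ n → f k' ≤ s → ¬ s < f (k + 1) := fun k k' hk hk' hfk' =>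
    not_lt.2 ((hf ⟨by omega, by omega⟩ ⟨by omega, hk'⟩ hk).trans hfk')
  set k₀ := Nat.findGreatest (fun k => f k ≤ s) n
  have hk₀n : k₀ ≤ n := Nat.findGreatest_le n
  have hfk₀ : f k₀ ≤ s := Nat.findGreatest_spec (P := fun k => f k ≤ s) (Nat.zero_le n) h0
  have hsucc : k₀ < n → s < f (k₀ + 1) := fun h =>
    lt_of_not_ge (Nat.findGreatest_is_greatest (Nat.lt_succ_self k₀) h)
  refine ⟨k₀, ⟨hk₀n, hfk₀, hsucc⟩, fun k ⟨hkn, hfk, hk⟩ => ?_⟩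
  obtain hlt | heq | hgt := lt_trichotomy k k₀
  · exact absurd (hk (by omega)) (no_later k k₀ hlt hk₀n hfk₀)
  · exact heq
  · exact absurd (hsucc (by omega)) (no_later k₀ k hgt hkn hfk)

namespace QO

section

variable {d g : ℕ} {lam : ℕ → Fin d → ℚ} {ν : Fin d → ℚ}

lemma pair_add (a b : Fin d → ℚ) : pair d ν (a + b) = pair d ν a + pair d ν b :=
  dotProduct_add ν a b

lemma E_eq_single {i : ℕ} (h₁ : 1 ≤ i) (h₂ : i ≤ d) :
    E d lam i = Pi.single (⟨i - 1, by omega⟩ : Fin d) 1 := by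
  funext j
  simp [E, h₁, h₂, Pi.single_apply, Fin.ext_iff]

lemma linearIndepOn_E_Icc {k : ℕ} (hk : k ≤ d) :
    LinearIndepOn ℚ (E d lam) (Finset.Icc 1 k : Set ℕ) := by
  have hmem (i : (Finset.Icc 1 k : Set ℕ)) : 1 ≤ i.1 ∧ i.1 ≤ k := by
    simpa using i.2
  let f : (Finset.Icc 1 k : Set ℕ) → Fin d := fun i => ⟨i.1 - 1, by have := hmem i; omega⟩
  have hf : Function.Injective f := fun a b hab => by
    have := hmem a; have := hmem b
    exact Subtype.ext (by have := congrArg Fin.val hab; simp only [f] at this; omega)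
  have hE : (fun i : (Finset.Icc 1 k : Set ℕ) => E d lam i) = Pi.basisFun ℚ (Fin d) ∘ f := by
    funext i
    have := hmem i
    simp [E_eq_single (lam := lam) this.1 (this.2.trans hk), f]
  change LinearIndependent ℚ (fun i : (Finset.Icc 1 k : Set ℕ) => E d lam i)
  rw [hE]
  exact (Pi.basisFun ℚ (Fin d)).linearIndependent.comp f hf

lemma idxOk_Icc {k : ℕ} (hk : k ≤ d) : IdxOk d g lam k (Finset.Icc 1 k) := by
  refine ⟨by simp, fun i hi => ?_, ?_, linearIndepOn_E_Icc hk⟩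
  · simp only [Finset.mem_Icc] at hi ⊢; omega
  · rw [Finset.filter_false_of_mem fun i hi => by simp only [Finset.mem_Icc] at hi; omega]
    simp

lemma IdxOk.insert_of_notMem_spanOf {k i : ℕ} {I : Finset ℕ} (hI : IdxOk d g lam k I)
    (hi : i ∈ Finset.Icc 1 (d + g)) (hid : i ≤ d) (hspan : E d lam i ∉ spanOf d lam I) :
    IdxOk d g lam (k + 1) (insert i I) := by
  obtain ⟨hcard, hsub, hbig, hli⟩ := hI
  have hiI : i ∉ I := fun h => hspan (Submodule.subset_span ⟨i, h, rfl⟩)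
  refine ⟨by rw [Finset.card_insert_of_notMem hiI, hcard], Finset.insert_subset hi hsub, ?_, ?_⟩
  · rwa [Finset.filter_insert, if_neg (by omega)]
  · show LinearIndepOn ℚ (E d lam) ↑(insert i I)
    rw [Finset.coe_insert]
    exact (linearIndepOn_insert (by exact_mod_cast hiI)).2 ⟨hli, hspan⟩

lemma IdxOk.erase {k i : ℕ} {I : Finset ℕ} (hI : IdxOk d g lam (k + 1) I) (hi : i ∈ I) :
    IdxOk d g lam k (I.erase i) := by
  obtain ⟨hcard, hsub, hbig, hli⟩ := hI
  refine ⟨by rw [Finset.card_erase_of_mem hi, hcard]; rfl, (Finset.erase_subset _ _).trans hsub,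
    (Finset.card_le_card (Finset.filter_subset_filter _ (Finset.erase_subset _ _))).trans hbig, ?_⟩
  exact LinearIndepOn.mono (s := (I : Set ℕ)) hli (Finset.coe_subset.2 (Finset.erase_subset _ _))

lemma IdxOk.exists_exchange {k : ℕ} {I I'' : Finset ℕ} (hI : IdxOk d g lam k I)
    (hI'' : IdxOk d g lam (k + 2) I'') :
    ∃ i ∈ I'', IdxOk d g lam (k + 1) (insert i I) ∧ IdxOk d g lam (k + 1) (I''.erase i) := by
  have hO : 2 ≤ (I''.filter fun i => E d lam i ∉ spanOf d lam I).card := by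
    have hin : (I''.filter fun i => E d lam i ∈ spanOf d lam I).card ≤ I.card :=
      LinearIndepOn.card_filter_mem_span_le hI''.2.2.2
    have := Finset.card_filter_add_card_filter_not (s := I'') fun i => E d lam i ∈ spanOf d lam I
    have := hI''.1; have := hI.1
    omega
  set O := I''.filter fun i => E d lam i ∉ spanOf d lam I
  have hObig : (O.filter fun i => d + 1 ≤ i).card ≤ 1 :=
    (Finset.card_le_card (Finset.filter_subset_filter _ (Finset.filter_subset _ _))).trans hI''.2.2.1
  obtain ⟨i, hi⟩ : (O.filter fun i => ¬ d + 1 ≤ i).Nonempty := by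
    rw [← Finset.card_pos]
    have := Finset.card_filter_add_card_filter_not (s := O) fun i => d + 1 ≤ i
    omega
  simp only [O, Finset.mem_filter] at hi
  obtain ⟨⟨hiI'', hspan⟩, hid⟩ := hi
  exact ⟨i, hiI'', hI.insert_of_notMem_spanOf (hI''.2.1 hiI'') (by omega) hspan, hI''.erase hiI''⟩

lemma mem_Jfin {k : ℕ} {w : Fin d → ℚ} :
    w ∈ Jfin d g lam k ↔ ∃ I : Finset ℕ, IdxOk d g lam k I ∧ w = ∑ i ∈ I, E d lam i := by
  simp only [Jfin, Finset.mem_image, Finset.mem_filter, Finset.mem_powerset]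
  constructor
  · rintro ⟨I, ⟨-, hI⟩, rfl⟩; exact ⟨I, hI, rfl⟩
  · rintro ⟨I, hI, rfl⟩; exact ⟨I, ⟨hI.2.1, hI⟩, rfl⟩

lemma ordJ_le {k : ℕ} {I : Finset ℕ} (hI : IdxOk d g lam k I) :
    ordJ d g lam k ν ≤ pair d ν (∑ i ∈ I, E d lam i) := by
  have hw : ∑ i ∈ I, E d lam i ∈ Jfin d g lam k := mem_Jfin.2 ⟨I, hI, rfl⟩
  rw [ordJ, dif_pos ⟨_, hw⟩]
  exact Finset.min'_le _ _ (Finset.mem_image_of_mem _ hw)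

lemma exists_idxOk_ordJ_eq {k : ℕ} (hk : k ≤ d) :
    ∃ I : Finset ℕ, IdxOk d g lam k I ∧ ordJ d g lam k ν = pair d ν (∑ i ∈ I, E d lam i) := by
  have hne : (Jfin d g lam k).Nonempty := ⟨_, mem_Jfin.2 ⟨_, idxOk_Icc hk, rfl⟩⟩
  rw [ordJ, dif_pos hne]
  obtain ⟨w, hw, hmin⟩ := Finset.mem_image.1 (Finset.min'_mem _ (hne.image (pair d ν)))
  obtain ⟨I, hI, rfl⟩ := mem_Jfin.1 hw
  exact ⟨I, hI, hmin.symm⟩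

lemma two_mul_ordJ_succ_le {k : ℕ} (hk : k + 2 ≤ d) :
    2 * ordJ d g lam (k + 1) ν ≤ ordJ d g lam k ν + ordJ d g lam (k + 2) ν := by
  obtain ⟨I, hI, hIeq⟩ := exists_idxOk_ordJ_eq (g := g) (lam := lam) (ν := ν) (by omega : k ≤ d)
  obtain ⟨I'', hI'', hI''eq⟩ := exists_idxOk_ordJ_eq (g := g) (lam := lam) (ν := ν) hk
  obtain ⟨i, hiI'', hins, hers⟩ := hI.exists_exchange hI''
  have hiI : i ∉ I := fun h => by
    have := hins.1; rw [Finset.insert_eq_of_mem h, hI.1] at this; omega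
  have h₁ := ordJ_le (ν := ν) hins
  have h₂ := ordJ_le (ν := ν) hers
  rw [Finset.sum_insert hiI, pair_add] at h₁
  rw [hI''eq, ← Finset.add_sum_erase _ _ hiI'', pair_add]
  linarith

lemma phiJ_monotoneOn : MonotoneOn (fun k => phiJ d g lam k ν) (Set.Icc 1 d) := by
  refine monotoneOn_of_le_succ Set.ordConnected_Icc fun k _ hk hk' => ?_
  rw [Order.succ_eq_add_one] at hk' ⊢
  obtain ⟨m, rfl⟩ : ∃ m, k = m + 1 := ⟨k - 1, by have := hk.1; omega⟩
  have := two_mul_ordJ_succ_le (g := g) (lam := lam) (ν := ν) (k := m) (by have := hk'.2; omega)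
  show ordJ d g lam (m + 1) ν - ordJ d g lam m ν ≤ ordJ d g lam (m + 2) ν - ordJ d g lam (m + 1) ν
  linarith

end

theorem statement2_general (d g : ℕ) (lam : ℕ → Fin d → ℚ)
    (ν : Fin d → ℚ)
    (s : ℕ) :
    ∃! k : ℕ, k ≤ d ∧ phiJ d g lam k ν ≤ (s : ℚ) ∧
      (k < d → (s : ℚ) < phiJ d g lam (k + 1) ν) :=
  existsUnique_le_and_lt_succ phiJ_monotoneOn (by simp [phiJ])

/-- For every `ν ∈ N` with `⟨ν, e_i⟩ > 0` for all `1 ≤ i ≤ d` and every integer `s ≥ 1`,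
there is exactly one integer `0 ≤ k ≤ d` such that `φ_k(ν) ≤ s < φ_{k+1}(ν)` (where
`φ_0 = 0` and `φ_{d+1} = +∞`, so for `k = d` the upper condition is vacuous). -/
theorem statement2 (d g : ℕ) (lam : ℕ → Fin d → ℚ) (hd : 1 ≤ d) (hg : 1 ≤ g)
    (hnn : ∀ j, 1 ≤ j → j ≤ g → ∀ i, 0 ≤ lam j i)
    (hmono : ∀ j, 1 ≤ j → j < g → ∀ i, lam j i ≤ lam (j + 1) i)
    (hnotin : ∀ j, 1 ≤ j → j ≤ g → lam j ∉ Mlat d lam (j - 1))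
    (ν : Fin d → ℚ) (hν : ν ∈ Ndual d g lam)
    (hpos : ∀ i, 1 ≤ i → i ≤ d → 0 < pair d ν (E d lam i))
    (s : ℕ) (hs : 1 ≤ s) :
    ∃! k : ℕ, k ≤ d ∧ phiJ d g lam k ν ≤ (s : ℚ) ∧
      (k < d → (s : ℚ) < phiJ d g lam (k + 1) ν) :=
  statement2_general d g lam ν s

end QO
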